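/- arXiv:2004.02152 — 2 statements merged into one kernel-verified Lean document; each statement's English description precedes it below -/
import Mathlib

section
/- Let (f_n)_{n∈ℤ} be a linearly independent frame of H, with frame operator S and canonical dual frame h_n = S⁻¹ f_n. Then there exists T ∈ GL(H) with f_n = Tⁿ f_0 for all n ∈ ℤ if and only if ⟨f_i, h_j⟩ = ⟨f_{i+1}, h_{j+1}⟩ for all i, j ∈ ℤ. -/
/-!
Write `h_n = S⁻¹ f_n`. If `T f_n = f_{n+1}`, pushing the series defining `S (T* x)` through `T`
gives `T S T* = S`, hence `T* S⁻¹ T = S⁻¹`, which is the shift invariance of `⟪f_i, h_j⟫`.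
Conversely, the reconstruction formula `x = ∑ ⟪h_n, x⟫ f_n` suggests
`T x = ∑ ⟪h_n, x⟫ f_{n+1}`. It is bounded: for a Bessel family `g` the analysis map
`x ↦ (⟪g_n, x⟫)_n` into `ℓ²` is continuous by the closed graph theorem, and its adjoint is the
synthesis `c ↦ ∑ c_n g_n`, so `T` is the analysis map of `f` after `S⁻¹`, followed by the
synthesis of `(f_{n+1})`. Shift invariance of the Gram matrix turns the series
for `T f_j` into the reconstruction series of `f_{j+1}`. The same construction for the inverse
shift inverts `T`, because bounded operators agreeing on a frame agree everywhere.
-/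

noncomputable section

open scoped InnerProductSpace

/-- `f` is a frame of `H` with lower bound `A` and upper bound `B`. -/
def IsFrame {H : Type} [NormedAddCommGroup H] [InnerProductSpace ℂ H] {I : Type}
    (f : I → H) (A B : ℝ) : Prop :=
  0 < A ∧ 0 < B ∧ ∀ x : H,
    Summable (fun n : I => ‖(inner ℂ x (f n) : ℂ)‖ ^ 2) ∧
    A * ‖x‖ ^ 2 ≤ ∑' n : I, ‖(inner ℂ x (f n) : ℂ)‖ ^ 2 ∧
    ∑' n : I, ‖(inner ℂ x (f n) : ℂ)‖ ^ 2 ≤ B * ‖x‖ ^ 2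

open scoped lp

variable {𝕜 ι H : Type*} [RCLike 𝕜] [NormedAddCommGroup H] [InnerProductSpace 𝕜 H]

lemma memℓp_inner_of_summable {f : ι → H} (hf : ∀ x, Summable fun i => ‖⟪x, f i⟫_𝕜‖ ^ 2)
    (x : H) : Memℓp (fun i => ⟪f i, x⟫_𝕜) 2 :=
  memℓp_gen <| by simpa [norm_inner_symm] using hf x

section Analysis

variable [CompleteSpace H] {f : ι → H}

def analysisOp (hf : ∀ x, Summable fun i => ‖⟪x, f i⟫_𝕜‖ ^ 2) : H →L[𝕜] ℓ²(ι, 𝕜) :=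
  ContinuousLinearMap.ofSeqClosedGraph
    (g := { toFun := fun x => ⟨fun i => ⟪f i, x⟫_𝕜, memℓp_inner_of_summable hf x⟩
            map_add' := fun _ _ => lp.ext <| funext fun _ => inner_add_right _ _ _
            map_smul' := fun _ _ => lp.ext <| funext fun _ => inner_smul_right _ _ _ })
    fun _ x c hu hc => lp.ext <| funext fun i =>
      tendsto_nhds_unique (((lp.evalCLM 𝕜 (fun _ : ι => 𝕜) 2 i).continuous.tendsto c).comp hc)
        (((continuous_const.inner continuous_id).tendsto x).comp hu)

variable (hf : ∀ x, Summable fun i => ‖⟪x, f i⟫_𝕜‖ ^ 2)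

@[simp]
lemma analysisOp_apply (x : H) (i : ι) : analysisOp hf x i = ⟪f i, x⟫_𝕜 := rfl

lemma adjoint_analysisOp_single [DecidableEq ι] (i : ι) (a : 𝕜) :
    (analysisOp hf).adjoint (lp.single 2 i a) = a • f i :=
  ext_inner_right 𝕜 fun y => by
    rw [ContinuousLinearMap.adjoint_inner_left, lp.inner_single_left, inner_smul_left,
      analysisOp_apply, RCLike.inner_apply']

lemma hasSum_adjoint_analysisOp (c : ℓ²(ι, 𝕜)) :
    HasSum (fun i => c i • f i) ((analysisOp hf).adjoint c) := by
  classical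
  simpa only [adjoint_analysisOp_single] using
    ((analysisOp hf).adjoint).hasSum (lp.hasSum_single ENNReal.ofNat_ne_top c)

end Analysis

section FrameOperator

variable {f : ι → H} {S : H ≃L[𝕜] H}

lemma hasSum_inner_symm_apply_smul (hS : ∀ x, HasSum (fun i => ⟪f i, x⟫_𝕜 • f i) (S x))
    (x : H) : HasSum (fun i => ⟪f i, S.symm x⟫_𝕜 • f i) x := by
  simpa using hS (S.symm x)

lemma ContinuousLinearMap.ext_of_frameOp {E : Type*} [TopologicalSpace E] [AddCommMonoid E]
    [Module 𝕜 E] [T2Space E] (hS : ∀ x, HasSum (fun i => ⟪f i, x⟫_𝕜 • f i) (S x))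
    {A B : H →L[𝕜] E} (h : ∀ i, A (f i) = B (f i)) : A = B := by
  ext x
  have hA := A.hasSum (hasSum_inner_symm_apply_smul hS x)
  have hB := B.hasSum (hasSum_inner_symm_apply_smul hS x)
  simp only [map_smul, h] at hA hB
  exact hA.unique hB

lemma apply_frameOp_adjoint [CompleteSpace H]
    (hS : ∀ x, HasSum (fun i => ⟪f i, x⟫_𝕜 • f i) (S x)) {e : ι ≃ ι} {T : H →L[𝕜] H}
    (hT : ∀ i, T (f i) = f (e i)) (x : H) : T (S (T.adjoint x)) = S x := by
  have h := T.hasSum (hS (T.adjoint x))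
  simp only [map_smul, ContinuousLinearMap.adjoint_inner_right, hT] at h
  exact h.unique (e.hasSum_iff.2 (hS x))

lemma inner_symm_apply_eq_of_apply_eq [CompleteSpace H]
    (hS : ∀ x, HasSum (fun i => ⟪f i, x⟫_𝕜 • f i) (S x)) {e : ι ≃ ι} {T : H ≃L[𝕜] H}
    (hT : ∀ i, T (f i) = f (e i)) (i j : ι) :
    ⟪f i, S.symm (f j)⟫_𝕜 = ⟪f (e i), S.symm (f (e j))⟫_𝕜 := by
  have hconj : T (S ((T : H →L[𝕜] H).adjoint (S.symm (f (e j))))) = S (S.symm (f (e j))) :=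
    apply_frameOp_adjoint hS (T := (T : H →L[𝕜] H)) hT _
  have hadj : (T : H →L[𝕜] H).adjoint (S.symm (f (e j))) = S.symm (f j) := by
    rw [S.eq_symm_apply, ← T.symm_apply_apply (S _), hconj,
      S.apply_symm_apply, ← hT, T.symm_apply_apply]
  rw [← hadj, ContinuousLinearMap.adjoint_inner_right, ContinuousLinearEquiv.coe_coe, hT]

lemma exists_clm_apply_eq_of_inner_symm_apply_eq [CompleteSpace H]
    (hf : ∀ x, Summable fun i => ‖⟪x, f i⟫_𝕜‖ ^ 2)
    (hS : ∀ x, HasSum (fun i => ⟪f i, x⟫_𝕜 • f i) (S x)) {e : ι ≃ ι}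
    (hG : ∀ i j, ⟪f i, S.symm (f j)⟫_𝕜 = ⟪f (e i), S.symm (f (e j))⟫_𝕜) :
    ∃ T : H →L[𝕜] H, ∀ i, T (f i) = f (e i) := by
  have hfe : ∀ x, Summable fun i => ‖⟪x, f (e i)⟫_𝕜‖ ^ 2 := fun x => e.summable_iff.2 (hf x)
  refine ⟨(analysisOp hfe).adjoint ∘L analysisOp hf ∘L S.symm, fun j => ?_⟩
  have h := hasSum_adjoint_analysisOp hfe (analysisOp hf (S.symm (f j)))
  simp only [analysisOp_apply, hG _ j] at h
  exact h.unique (e.hasSum_iff.2 (hasSum_inner_symm_apply_smul hS (f (e j))))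

lemma exists_equiv_apply_eq_of_inner_symm_apply_eq [CompleteSpace H]
    (hf : ∀ x, Summable fun i => ‖⟪x, f i⟫_𝕜‖ ^ 2)
    (hS : ∀ x, HasSum (fun i => ⟪f i, x⟫_𝕜 • f i) (S x)) {e : ι ≃ ι}
    (hG : ∀ i j, ⟪f i, S.symm (f j)⟫_𝕜 = ⟪f (e i), S.symm (f (e j))⟫_𝕜) :
    ∃ T : H ≃L[𝕜] H, ∀ i, T (f i) = f (e i) := by
  obtain ⟨T, hT⟩ := exists_clm_apply_eq_of_inner_symm_apply_eq hf hS hG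
  obtain ⟨T', hT'⟩ := exists_clm_apply_eq_of_inner_symm_apply_eq hf hS (e := e.symm)
    fun i j => by simpa using (hG (e.symm i) (e.symm j)).symm
  have hT'T : T' ∘L T = .id 𝕜 H := ContinuousLinearMap.ext_of_frameOp hS fun i => by
    simp [hT, hT']
  have hTT' : T ∘L T' = .id 𝕜 H := ContinuousLinearMap.ext_of_frameOp hS fun i => by
    simp [hT, hT']
  exact ⟨.equivOfInverse' T T' hTT' hT'T, hT⟩

lemma exists_equiv_apply_eq_iff [CompleteSpace H]
    (hf : ∀ x, Summable fun i => ‖⟪x, f i⟫_𝕜‖ ^ 2)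
    (hS : ∀ x, HasSum (fun i => ⟪f i, x⟫_𝕜 • f i) (S x)) (e : ι ≃ ι) :
    (∃ T : H ≃L[𝕜] H, ∀ i, T (f i) = f (e i)) ↔
      ∀ i j, ⟪f i, S.symm (f j)⟫_𝕜 = ⟪f (e i), S.symm (f (e j))⟫_𝕜 :=
  ⟨fun ⟨_, hT⟩ => inner_symm_apply_eq_of_apply_eq hS hT,
    exists_equiv_apply_eq_of_inner_symm_apply_eq hf hS⟩

end FrameOperator

lemma ContinuousLinearEquiv.forall_eq_zpow_apply_iff {R M : Type*} [Semiring R]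
    [TopologicalSpace M] [AddCommMonoid M] [Module R M] (T : M ≃L[R] M) (f : ℤ → M) :
    (∀ n : ℤ, f n = (T ^ n) (f 0)) ↔ ∀ n : ℤ, T (f n) = f (n + 1) := by
  have hstep : ∀ n : ℤ, T ((T ^ n) (f 0)) = (T ^ (n + 1)) (f 0) := fun n => by
    rw [add_comm, zpow_add, zpow_one]; rfl
  refine ⟨fun h n => by rw [h n, h (n + 1), hstep], fun h n => ?_⟩
  induction n using Int.induction_on with
  | zero => rfl
  | succ k ih => rw [← h, ← hstep, ih]
  | pred k ih =>
    apply T.injective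
    rw [h, hstep, sub_add_cancel, ih]

theorem stmt8_general {H : Type} [NormedAddCommGroup H] [InnerProductSpace ℂ H]
    [CompleteSpace H]
    (f : ℤ → H) (hframe : ∃ A B : ℝ, IsFrame f A B)
    (S : H ≃L[ℂ] H)
    (hS : ∀ x : H, HasSum (fun n : ℤ => (inner ℂ (f n) x : ℂ) • f n) (S x)) :
    (∃ T : H ≃L[ℂ] H, ∀ n : ℤ, f n = (T ^ n) (f 0)) ↔
      ∀ i j : ℤ, (inner ℂ (f i) (S.symm (f j)) : ℂ) =
        inner ℂ (f (i + 1)) (S.symm (f (j + 1))) := by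
  obtain ⟨_, _, -, -, hfr⟩ := hframe
  simp only [ContinuousLinearEquiv.forall_eq_zpow_apply_iff]
  exact exists_equiv_apply_eq_iff (fun x => (hfr x).1) hS (Equiv.addRight 1)

theorem stmt8 {H : Type} [NormedAddCommGroup H] [InnerProductSpace ℂ H]
    [CompleteSpace H] [TopologicalSpace.SeparableSpace H]
    (f : ℤ → H) (hframe : ∃ A B : ℝ, IsFrame f A B)
    (hli : LinearIndependent ℂ f)
    (S : H ≃L[ℂ] H)
    (hS : ∀ x : H, HasSum (fun n : ℤ => (inner ℂ (f n) x : ℂ) • f n) (S x)) :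
    (∃ T : H ≃L[ℂ] H, ∀ n : ℤ, f n = (T ^ n) (f 0)) ↔
      ∀ i j : ℤ, (inner ℂ (f i) (S.symm (f j)) : ℂ) =
        inner ℂ (f (i + 1)) (S.symm (f (j + 1))) :=
  stmt8_general f hframe S hS
end
end

section
/- Let (f_n)_{n∈ℤ} be a tight frame of H with bound B > 0 such that f_n = Tⁿ f_0 for all n ∈ ℤ with T ∈ GL(H). If there exists n₀ ∈ ℤ with ‖f_{n₀}‖ = √B, then (f_n)_{n∈ℤ} is a multiple of an orthonormal basis: the family (B^{-1/2} f_n)_{n∈ℤ} is orthonormal and its linear span is dense in H. -/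
noncomputable section

open scoped InnerProductSpace

/-- `f` is a tight frame of `H` with bound `A`. -/
def IsTightFrame {H : Type} [NormedAddCommGroup H] [InnerProductSpace ℂ H] {I : Type}
    (f : I → H) (A : ℝ) : Prop :=
  0 < A ∧ ∀ x : H, HasSum (fun n : I => ‖(inner ℂ x (f n) : ℂ)‖ ^ 2) (A * ‖x‖ ^ 2)

/-! The index shift `n ↦ n + 1` leaves the frame sums `∑ |⟪x, f n⟫|²` unchanged, and
`⟪x, f (n + 1)⟫ = ⟪T† x, f n⟫`, so `T†` is isometric; since `T` is invertible this makes `T`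
unitary, hence every `‖f n‖` equals `‖f n₀‖ = √B`. After rescaling to bound `1`, a frame vector
of norm `1` already exhausts `∑ |⟪f i, f n⟫|² = ‖f i‖²` with its own term, so it is orthogonal
to all the others, and the frame identity forces the orthogonal complement of the span to be `0`. -/

open ContinuousLinearMap

namespace ContinuousLinearEquiv

section InnerProductSpace

variable {𝕜 H : Type*} [RCLike 𝕜] [NormedAddCommGroup H] [InnerProductSpace 𝕜 H] [CompleteSpace H]

theorem norm_map_of_norm_adjoint_map (T : H ≃L[𝕜] H)
    (h : ∀ x, ‖adjoint (T : H →L[𝕜] H) x‖ = ‖x‖) (x : H) : ‖T x‖ = ‖x‖ := by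
  have hinv : ∀ y, (T : H →L[𝕜] H) (adjoint (T : H →L[𝕜] H) y) = y := by
    simpa [ContinuousLinearMap.ext_iff] using (norm_map_iff_adjoint_comp_self _).mp h
  rw [← h, show adjoint (T : H →L[𝕜] H) (T x) = x from T.injective (hinv (T x))]

end InnerProductSpace

section NormedSpace

variable {𝕜 E : Type*} [NontriviallyNormedField 𝕜] [SeminormedAddCommGroup E] [NormedSpace 𝕜 E]

theorem norm_zpow_apply (T : E ≃L[𝕜] E) (hT : ∀ x, ‖T x‖ = ‖x‖) (k : ℤ) (x : E) :
    ‖(T ^ k) x‖ = ‖x‖ := by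
  induction k using Int.induction_on generalizing x with
  | zero => rfl
  | succ k ih => rw [zpow_add_one]; exact (ih (T x)).trans (hT x)
  | pred k ih =>
    rw [zpow_sub_one]
    exact (ih (T.symm x)).trans (by simpa using (hT (T.symm x)).symm)

end NormedSpace

end ContinuousLinearEquiv

namespace IsTightFrame

variable {H : Type} [NormedAddCommGroup H] [InnerProductSpace ℂ H] {I : Type} {f : I → H} {A : ℝ}

theorem const_smul (hf : IsTightFrame f A) {c : ℂ} (hc : c ≠ 0) :
    IsTightFrame (fun n => c • f n) (‖c‖ ^ 2 * A) := by
  refine ⟨mul_pos (pow_pos (norm_pos_iff.mpr hc) 2) hf.1, fun x => ?_⟩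
  simpa only [inner_smul_right, norm_mul, mul_pow, mul_assoc] using (hf.2 x).mul_left (‖c‖ ^ 2)

theorem inner_eq_zero_of_norm_sq_eq (hf : IsTightFrame f A) {i j : I} (hi : ‖f i‖ ^ 2 = A)
    (hij : j ≠ i) : ⟪f i, f j⟫_ℂ = 0 := by
  classical
  have hle : ∑ n ∈ {i, j}, ‖⟪f i, f n⟫_ℂ‖ ^ 2 ≤ A * ‖f i‖ ^ 2 :=
    sum_le_hasSum _ (fun n _ => sq_nonneg _) (hf.2 (f i))
  have hself : ‖⟪f i, f i⟫_ℂ‖ ^ 2 = A * ‖f i‖ ^ 2 := by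
    rw [inner_self_eq_norm_sq_to_K, norm_pow, RCLike.norm_ofReal, abs_norm, ← hi]
    ring
  rw [Finset.sum_pair hij.symm, hself] at hle
  have hzero : ‖⟪f i, f j⟫_ℂ‖ ^ 2 = 0 := le_antisymm (by linarith) (sq_nonneg _)
  simpa using hzero

theorem orthonormal (hf : IsTightFrame f 1) (hnorm : ∀ n, ‖f n‖ = 1) : Orthonormal ℂ f :=
  ⟨hnorm, fun {i j} hij => hf.inner_eq_zero_of_norm_sq_eq (by rw [hnorm, one_pow]) hij.symm⟩

theorem eq_zero_of_forall_inner_eq_zero (hf : IsTightFrame f A) {x : H}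
    (hx : ∀ n, ⟪x, f n⟫_ℂ = 0) : x = 0 := by
  have hsum : HasSum (fun n => ‖⟪x, f n⟫_ℂ‖ ^ 2) 0 := by simp [hx]
  simpa [hf.1.ne'] using (hf.2 x).unique hsum

theorem dense_span [CompleteSpace H] (hf : IsTightFrame f A) :
    Dense (Submodule.span ℂ (Set.range f) : Set H) := by
  rw [Submodule.dense_iff_topologicalClosure_eq_top, Submodule.topologicalClosure_eq_top_iff,
    Submodule.eq_bot_iff]
  exact fun x hx => hf.eq_zero_of_forall_inner_eq_zero fun n =>
    Submodule.inner_left_of_mem_orthogonal (Submodule.subset_span (Set.mem_range_self n)) hx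

theorem norm_adjoint_apply [CompleteSpace H] {f : ℤ → H} (hf : IsTightFrame f A) {T : H →L[ℂ] H}
    (hT : ∀ n, f (n + 1) = T (f n)) (x : H) : ‖adjoint T x‖ = ‖x‖ := by
  have hshift : HasSum (fun n => ‖⟪adjoint T x, f n⟫_ℂ‖ ^ 2) (A * ‖x‖ ^ 2) := by
    simpa only [adjoint_inner_left, ← hT, Function.comp_def, Equiv.coe_addRight] using
      (Equiv.addRight (1 : ℤ)).hasSum_iff.mpr (hf.2 x)
  have hsq := mul_left_cancel₀ hf.1.ne' ((hf.2 (adjoint T x)).unique hshift)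
  exact (pow_left_inj₀ (norm_nonneg _) (norm_nonneg _) two_ne_zero).mp hsq

theorem norm_eq_norm_of_eq_zpow_apply [CompleteSpace H] {f : ℤ → H} (hf : IsTightFrame f A)
    (T : H ≃L[ℂ] H) (hT : ∀ n, f n = (T ^ n) (f 0)) (m n : ℤ) : ‖f m‖ = ‖f n‖ := by
  have hshift : ∀ n, f (n + 1) = T (f n) := fun n => by
    rw [hT, hT n, add_comm, zpow_one_add]
    rfl
  have hiso := T.norm_map_of_norm_adjoint_map (hf.norm_adjoint_apply hshift)
  have hsplit : T ^ m = T ^ (m - n) * T ^ n := by rw [← zpow_add, sub_add_cancel]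
  rw [hT m, hT n, hsplit]
  exact T.norm_zpow_apply hiso _ _

end IsTightFrame

theorem stmt14_general {H : Type} [NormedAddCommGroup H] [InnerProductSpace ℂ H]
    [CompleteSpace H]
    (f : ℤ → H) (B : ℝ) (hframe : IsTightFrame f B)
    (T : H ≃L[ℂ] H) (hT : ∀ n : ℤ, f n = (T ^ n) (f 0))
    (n₀ : ℤ) (hn₀ : ‖f n₀‖ = Real.sqrt B) :
    Orthonormal ℂ (fun n : ℤ => (((Real.sqrt B)⁻¹ : ℝ) : ℂ) • f n) ∧
      Dense (Submodule.span ℂ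
        (Set.range (fun n : ℤ => (((Real.sqrt B)⁻¹ : ℝ) : ℂ) • f n)) : Set H) := by
  have hsqrtB : 0 < Real.sqrt B := Real.sqrt_pos.mpr hframe.1
  set c : ℂ := (((Real.sqrt B)⁻¹ : ℝ) : ℂ)
  have hc : ‖c‖ * Real.sqrt B = 1 := by
    rw [Complex.norm_real, Real.norm_of_nonneg (inv_nonneg.mpr hsqrtB.le),
      inv_mul_cancel₀ hsqrtB.ne']
  have hg : IsTightFrame (fun n => c • f n) 1 := by
    convert hframe.const_smul (c := c) (fun h0 => by simp [h0] at hc) using 1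
    rw [← Real.sq_sqrt hframe.1.le, ← mul_pow, hc, one_pow]
  have hgT : ∀ n : ℤ, c • f n = (T ^ n) (c • f 0) := fun n => by rw [hT n, map_smul]
  have hnorm : ∀ n, ‖c • f n‖ = 1 := fun n => by
    rw [hg.norm_eq_norm_of_eq_zpow_apply T hgT n n₀, norm_smul, hn₀, hc]
  exact ⟨hg.orthonormal hnorm, hg.dense_span⟩

theorem stmt14 {H : Type} [NormedAddCommGroup H] [InnerProductSpace ℂ H]
    [CompleteSpace H] [TopologicalSpace.SeparableSpace H]
    (f : ℤ → H) (B : ℝ) (hframe : IsTightFrame f B)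
    (T : H ≃L[ℂ] H) (hT : ∀ n : ℤ, f n = (T ^ n) (f 0))
    (n₀ : ℤ) (hn₀ : ‖f n₀‖ = Real.sqrt B) :
    Orthonormal ℂ (fun n : ℤ => (((Real.sqrt B)⁻¹ : ℝ) : ℂ) • f n) ∧
      Dense (Submodule.span ℂ
        (Set.range (fun n : ℤ => (((Real.sqrt B)⁻¹ : ℝ) : ℂ) • f n)) : Set H) :=
  stmt14_general f B hframe T hT n₀ hn₀
end
end
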